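/- Fix integers n ≥ k ≥ 2 and a real A. Suppose real numbers y_{i,t}, for 2 ≤ i ≤ k+1 and 0 ≤ t ≤ n, satisfy: y_{k+1,t} = 0 for all t; y_{i,n} = A·C(n,i) for 2 ≤ i ≤ k; and the recurrence y_{i,t−1} = y_{i,t}·(1 − i/t) + y_{i+1,t}·((i+1)/t) for all 2 ≤ i ≤ k and 1 ≤ t ≤ n. Then y_{i,t} = A·C(t,i)·S^{n−t}_{k−i} for all 2 ≤ i ≤ k and 0 ≤ t ≤ n. -/

import Mathlib

open scoped BigOperators

/-- `S^i_j = C(i,0) + C(i,1) + ⋯ + C(i,j)` (with `C(i,j) = 0` for `i < j`). -/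
def Scoef (i j : ℕ) : ℕ := ∑ l ∈ Finset.range (j + 1), i.choose l

lemma scoef_zero (j : ℕ) : Scoef 0 j = 1 := by
  unfold Scoef
  rw [Finset.sum_range_succ']
  simp

lemma scoef_step (i j : ℕ) : Scoef i (j + 1) = Scoef i j + i.choose (j + 1) :=
  Finset.sum_range_succ _ _

lemma scoef_pascal (m j : ℕ) : Scoef (m + 1) (j + 1) = Scoef m (j + 1) + Scoef m j := by
  induction j with
  | zero =>
      simp [Scoef, Finset.sum_range_succ]
      omega
  | succ j ihj =>
      rw [scoef_step (m + 1) (j + 1), ihj, scoef_step m (j + 1), Nat.choose_succ_succ]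
      have h := scoef_step m j
      simp only [Nat.succ_eq_add_one] at *
      omega

lemma choose_real1 (t i : ℕ) (ht : 1 ≤ t) :
    (t.choose i : ℝ) * (1 - (i : ℝ) / t) = ((t - 1).choose i : ℝ) := by
  have htR : (t : ℝ) ≠ 0 := by positivity
  rcases le_or_gt i t with h | h
  · have hnat : (t - 1).choose i * t = t.choose i * (t - i) := by
      have h1 := Nat.choose_mul_succ_eq (t - 1) i
      rw [Nat.sub_add_cancel ht] at h1
      exact h1
    have : ((t-1).choose i : ℝ) * t = (t.choose i : ℝ) * ((t : ℝ) - i) := by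
      have := congrArg (Nat.cast : ℕ → ℝ) hnat
      push_cast [Nat.cast_sub h] at this
      linarith
    field_simp
    linarith
  · have h1 : t.choose i = 0 := Nat.choose_eq_zero_of_lt h
    have h2 : (t - 1).choose i = 0 := Nat.choose_eq_zero_of_lt (by omega)
    simp [h1, h2]

lemma choose_real2 (t i : ℕ) (ht : 1 ≤ t) :
    (t.choose (i + 1) : ℝ) * (((i : ℝ) + 1) / t) = ((t - 1).choose i : ℝ) := by
  have htR : (t : ℝ) ≠ 0 := by positivity
  have hnat : t * (t - 1).choose i = t.choose (i + 1) * (i + 1) := by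
    have h1 := Nat.add_one_mul_choose_eq (t - 1) i
    rw [Nat.sub_add_cancel ht] at h1
    exact h1
  have : (t : ℝ) * ((t-1).choose i : ℝ) = (t.choose (i+1) : ℝ) * ((i : ℝ) + 1) := by
    exact_mod_cast congrArg (Nat.cast : ℕ → ℝ) hnat
  field_simp
  linarith


/-- Fix `n ≥ k ≥ 2` and `A : ℝ`.  If the reals `y i t`
(for `2 ≤ i ≤ k+1`, `0 ≤ t ≤ n`) satisfy `y (k+1) t = 0`, `y i n = A·C(n,i)` for
`2 ≤ i ≤ k`, and the recurrence `y i (t−1) = y i t·(1 − i/t) + y (i+1) t·((i+1)/t)` for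
`2 ≤ i ≤ k`, `1 ≤ t ≤ n`, then `y i t = A·C(t,i)·S^{n−t}_{k−i}` for all `2 ≤ i ≤ k`,
`0 ≤ t ≤ n`. -/
theorem meanfield_recurrence_negative
    (n k : ℕ) (hk : 2 ≤ k) (hkn : k ≤ n) (A : ℝ) (y : ℕ → ℕ → ℝ)
    (htop : ∀ t ≤ n, y (k + 1) t = 0)
    (hinit : ∀ i, 2 ≤ i → i ≤ k → y i n = A * (n.choose i : ℝ))
    (hrec : ∀ i, 2 ≤ i → i ≤ k → ∀ t, 1 ≤ t → t ≤ n →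
      y i (t - 1) = y i t * (1 - (i : ℝ) / (t : ℝ)) +
        y (i + 1) t * (((i : ℝ) + 1) / (t : ℝ))) :
    ∀ i, 2 ≤ i → i ≤ k → ∀ t ≤ n,
      y i t = A * (t.choose i : ℝ) * (Scoef (n - t) (k - i) : ℝ) := by
  have key : ∀ d, d ≤ n → ∀ i, 2 ≤ i → i ≤ k →
      y i (n - d) = A * ((n - d).choose i : ℝ) * (Scoef d (k - i) : ℝ) := by
    intro d
    induction d with
    | zero =>
      intro _ i h2 hik
      simp [Nat.sub_zero, scoef_zero, hinit i h2 hik]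
    | succ d ih =>
      intro hd i h2 hik
      have ht1 : 1 ≤ n - d := by omega
      have hnsd : n - (d + 1) = (n - d) - 1 := by omega
      set t := n - d with htdef
      rw [hnsd, hrec i h2 hik t ht1 (by omega)]
      have hy1 := ih (by omega) i h2 hik
      rcases eq_or_lt_of_le hik with heq | hlt
      · -- i = k
        subst heq
        rw [htop t (by omega)]
        have hki : i - i = 0 := by omega
        rw [hy1, hki]
        rw [show (Scoef d 0 : ℝ) = 1 by simp [Scoef], show (Scoef (d+1) 0 : ℝ) = 1 by simp [Scoef]]
        have e1 := choose_real1 t i ht1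
        linear_combination A * e1
      · -- i < k
        have hy2 := ih (by omega) (i + 1) (by omega) (by omega)
        rw [hy1, hy2]
        have hkk : k - i = (k - (i + 1)) + 1 := by omega
        rw [hkk, scoef_pascal]
        have e1 := choose_real1 t i ht1
        have e2 := choose_real2 t i ht1
        push_cast
        linear_combination
          (A * (Scoef d (k - (i + 1) + 1) : ℝ)) * e1 +
          (A * (Scoef d (k - (i + 1)) : ℝ)) * e2
  intro i h2 hik t htn
  have := key (n - t) (by omega) i h2 hik
  rwa [Nat.sub_sub_self htn] at this
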